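/- The space of harmonic tropical morphisms from a fixed simple tropical curve C with n leaves to ℝ^m, modulo translations of ℝ^m, is a real vector space of dimension m(n−1). -/

import Mathlib

open Finset

section GraphSetup

variable {V D : Type} [Fintype V] [Fintype D] [DecidableEq V] [DecidableEq D]

/-- A loop in a graph given by darts: a nonempty cyclic chain of darts, injective on
(unoriented) edges.  `rev` is orientation reversal and `tail` the initial vertex of
a dart; the head of `d` is `tail (rev d)`. -/
def IsLoop (rev : D → D) (tail : D → V) (c : List D) : Prop :=
  c ≠ [] ∧ c.Nodup ∧ (∀ d ∈ c, rev d ∉ c) ∧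
    c.Chain' (fun d d' => tail (rev d) = tail d') ∧
    ∀ a ∈ c.head?, ∀ b ∈ c.getLast?, tail (rev b) = tail a

/-- The integral of a 1-form `ω` along a loop `c`: `Σ l(e)·ω(e⃗)`. -/
def loopIntegral (len : D → ℝ) (ω : D → ℝ) (c : List D) : ℝ :=
  (c.map fun d => len d * ω d).sum

/-- A 1-form on the graph: antisymmetric under orientation reversal and satisfying
the Kirchhoff balancing condition at every internal (non-leaf) vertex. -/
def IsBalanced (rev : D → D) (tail : D → V) (isLeaf : V → Prop) [DecidablePred isLeaf]
    (ω : D → ℝ) : Prop :=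
  (∀ d, ω (rev d) = - ω d) ∧
    ∀ v, ¬ isLeaf v → ∑ d ∈ univ.filter (fun d => tail d = v), ω d = 0

/-- A 1-form is exact if its integral over every loop vanishes. -/
def IsExact (rev : D → D) (tail : D → V) (len : D → ℝ) (ω : D → ℝ) : Prop :=
  ∀ c : List D, IsLoop rev tail c → loopIntegral len ω c = 0

/-- A 1-form is holomorphic if its residues (its values on leaf edges) all vanish. -/
def IsHolomorphic (tail : D → V) (isLeaf : V → Prop) (ω : D → ℝ) : Prop :=
  ∀ d, isLeaf (tail d) → ω d = 0

/-- Connectivity of the graph: any two vertices are joined by a chain of darts. -/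
def GraphConnected (rev : D → D) (tail : D → V) : Prop :=
  ∀ v w : V, Relation.ReflTransGen (fun x y => ∃ d, tail d = x ∧ tail (rev d) = y) v w

end GraphSetup
section Submodules
set_option linter.unusedSectionVars false

variable {V D : Type} [Fintype V] [Fintype D] [DecidableEq V] [DecidableEq D]

theorem loopIntegral_add (len a b : D → ℝ) (c : List D) :
    loopIntegral len (a + b) c = loopIntegral len a c + loopIntegral len b c := by
  induction c with
  | nil => simp [loopIntegral]
  | cons d t ih =>
    simp only [loopIntegral, List.map_cons, List.sum_cons] at ih ⊢
    rw [ih, Pi.add_apply]; ring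

theorem loopIntegral_smul (len : D → ℝ) (r : ℝ) (a : D → ℝ) (c : List D) :
    loopIntegral len (r • a) c = r * loopIntegral len a c := by
  induction c with
  | nil => simp [loopIntegral]
  | cons d t ih =>
    simp only [loopIntegral, List.map_cons, List.sum_cons] at ih ⊢
    rw [ih, Pi.smul_apply, smul_eq_mul]; ring

/-- The space `Ω(C)` of 1-forms (balanced, antisymmetric). -/
def OmegaSub (rev : D → D) (tail : D → V) (isLeaf : V → Prop) [DecidablePred isLeaf] :
    Submodule ℝ (D → ℝ) where
  carrier := {ω | IsBalanced rev tail isLeaf ω}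
  zero_mem' := ⟨fun d => by simp, fun v hv => by simp⟩
  add_mem' := by
    rintro a b ⟨ha1, ha2⟩ ⟨hb1, hb2⟩
    refine ⟨fun d => ?_, fun v hv => ?_⟩
    · simp only [Pi.add_apply, ha1 d, hb1 d]; ring
    · simp only [Pi.add_apply, Finset.sum_add_distrib, ha2 v hv, hb2 v hv, add_zero]
  smul_mem' := by
    rintro r a ⟨ha1, ha2⟩
    refine ⟨fun d => ?_, fun v hv => ?_⟩
    · simp only [Pi.smul_apply, smul_eq_mul, ha1 d]; ring
    · simp only [Pi.smul_apply, smul_eq_mul, ← Finset.mul_sum, ha2 v hv, mul_zero]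

/-- The space `Ω₀(C)` of exact 1-forms. -/
def Omega0Sub (rev : D → D) (tail : D → V) (isLeaf : V → Prop) [DecidablePred isLeaf]
    (len : D → ℝ) : Submodule ℝ (D → ℝ) where
  carrier := {ω | IsBalanced rev tail isLeaf ω ∧ IsExact rev tail len ω}
  zero_mem' := ⟨(OmegaSub rev tail isLeaf).zero_mem, fun c _ => by simp [loopIntegral]⟩
  add_mem' := by
    rintro a b ⟨ha, ha'⟩ ⟨hb, hb'⟩
    exact ⟨(OmegaSub rev tail isLeaf).add_mem ha hb,
      fun c hc => by rw [loopIntegral_add, ha' c hc, hb' c hc, add_zero]⟩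
  smul_mem' := by
    rintro r a ⟨ha, ha'⟩
    exact ⟨(OmegaSub rev tail isLeaf).smul_mem r ha,
      fun c hc => by rw [loopIntegral_smul, ha' c hc, mul_zero]⟩

/-- The space `Ω_H(C)` of holomorphic 1-forms (all residues zero). -/
def OmegaHSub (rev : D → D) (tail : D → V) (isLeaf : V → Prop) [DecidablePred isLeaf] :
    Submodule ℝ (D → ℝ) where
  carrier := {ω | IsBalanced rev tail isLeaf ω ∧ IsHolomorphic tail isLeaf ω}
  zero_mem' := ⟨(OmegaSub rev tail isLeaf).zero_mem, fun d _ => rfl⟩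
  add_mem' := by
    rintro a b ⟨ha, ha'⟩ ⟨hb, hb'⟩
    exact ⟨(OmegaSub rev tail isLeaf).add_mem ha hb,
      fun d hd => by simp [Pi.add_apply, ha' d hd, hb' d hd]⟩
  smul_mem' := by
    rintro r a ⟨ha, ha'⟩
    exact ⟨(OmegaSub rev tail isLeaf).smul_mem r ha,
      fun d hd => by simp [Pi.smul_apply, ha' d hd]⟩

end Submodules
section Harm

variable {V D : Type} [Fintype V] [Fintype D] [DecidableEq V] [DecidableEq D]

/-- The space of harmonic tropical morphisms `C → ℝ^m` modulo translations,
identified with the space of balanced exact `ℝ^m`-valued 1-forms (the gradient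
data of the morphisms). -/
def HarmSub (rev : D → D) (tail : D → V) (isLeaf : V → Prop) [DecidablePred isLeaf]
    (len : D → ℝ) (m : ℕ) : Submodule ℝ (D → Fin m → ℝ) where
  carrier := {ω | ∀ j, (fun d => ω d j) ∈ Omega0Sub rev tail isLeaf len}
  zero_mem' := fun j => (Omega0Sub rev tail isLeaf len).zero_mem
  add_mem' := by
    intro a b ha hb j
    exact (Omega0Sub rev tail isLeaf len).add_mem (ha j) (hb j)
  smul_mem' := by
    intro r a ha j
    exact (Omega0Sub rev tail isLeaf len).smul_mem r (ha j)

end Harm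

/-!
A harmonic morphism to `ℝ^m` modulo translations is the same as `m` balanced exact 1-forms, so
everything reduces to `dim Ω₀ = n - 1`.

Upper bound: the residues of a form in `Ω₀` sum to zero, and they determine the form. Indeed, if
all residues vanish but `ω ≠ 0`, then from the head of any dart with `ω > 0` balancing provides
another dart with `ω > 0`; following these darts closes up into a loop along which the integral
of `ω` is positive, contradicting exactness.

Lower bound: gradients of functions harmonic at the interior vertices lie in `Ω₀`. Harmonicity
imposes one linear condition per interior vertex, so these functions form a space of dimension at
least `n`, and on a connected graph only the constants have zero gradient.
-/

open Function Module

section PeriodicOrbit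

variable {α : Type*}

lemma Function.periodicPts_nonempty [Finite α] [Nonempty α] (f : α → α) :
    (periodicPts f).Nonempty := by
  let x := Classical.arbitrary α
  obtain ⟨a, b, hab, heq⟩ := Finite.exists_ne_map_eq_of_infinite fun k => f^[k] x
  wlog hlt : a < b generalizing a b
  · exact this b a hab.symm heq.symm (by omega)
  refine ⟨f^[a] x, mk_mem_periodicPts (n := b - a) (by omega) ?_⟩
  rw [IsPeriodicPt, IsFixedPt, ← iterate_add_apply, Nat.sub_add_cancel hlt.le, heq]

lemma Function.exists_cyclic_list [Finite α] [Nonempty α] (f : α → α) :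
    ∃ l : List α, l ≠ [] ∧ l.Nodup ∧ l.IsChain (fun a b => f a = b) ∧
      ∀ a ∈ l.head?, ∀ b ∈ l.getLast?, f b = a := by
  obtain ⟨x, hx⟩ := periodicPts_nonempty f
  obtain ⟨p, hp⟩ : ∃ p, minimalPeriod f x = p + 1 :=
    Nat.exists_eq_add_one.mpr (minimalPeriod_pos_of_mem_periodicPts hx)
  refine ⟨(List.range (p + 1)).map (f^[·] x), by simp, ?_, ?_, ?_⟩
  · simpa [periodicOrbit, hp] using (nodup_periodicOrbit (f := f) (x := x))
  · rw [List.isChain_map, List.isChain_range_succ]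
    exact fun k _ => (iterate_succ_apply' f k x).symm
  · simp only [List.head?_map, List.getLast?_map, List.head?_range, List.getLast?_range,
      Nat.add_one_ne_zero, if_false, Nat.add_sub_cancel, Option.map_some, Option.mem_def,
      Option.some_inj]
    rintro _ rfl _ rfl
    rw [← iterate_succ_apply' f p x, Nat.succ_eq_add_one, ← hp, iterate_minimalPeriod,
      iterate_zero_apply]

end PeriodicOrbit

section LinearAlgebra

variable {K M N : Type*} [Field K]

theorem Submodule.finrank_le_card_sub_one_of_sum_eq_zero [CharZero K] {ι : Type*} [Fintype ι]
    (p : Submodule K (ι → K)) (hp : ∀ x ∈ p, ∑ i, x i = 0) :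
    finrank K p ≤ Fintype.card ι - 1 := by
  rcases isEmpty_or_nonempty ι with _ | _
  · simpa using p.finrank_le
  · have hlt : finrank K p < Fintype.card ι := by
      rw [← Module.finrank_fintype_fun_eq_card K]
      refine Submodule.finrank_lt fun htop => ?_
      have h1 := hp (fun _ => 1) (htop ▸ Submodule.mem_top)
      simp at h1
    omega

theorem Submodule.finrank_le_finrank_map_add_finrank_ker [AddCommGroup M] [Module K M]
    [FiniteDimensional K M] [AddCommGroup N] [Module K N] (f : M →ₗ[K] N) (p : Submodule K M) :
    finrank K p ≤ finrank K (p.map f) + finrank K (LinearMap.ker f) := by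
  have hrank := LinearMap.finrank_range_add_finrank_ker (f.domRestrict p)
  rw [LinearMap.range_domRestrict, LinearMap.ker_domRestrict] at hrank
  have hker : finrank K ((LinearMap.ker f).comap p.subtype) ≤ finrank K (LinearMap.ker f) := by
    rw [← Submodule.finrank_map_subtype_eq, Submodule.map_comap_subtype]
    exact Submodule.finrank_mono inf_le_right
  omega

end LinearAlgebra

theorem List.sum_map_sub_of_isChain {α M : Type*} [AddCommGroup M] (a b : α → M) :
    ∀ (x : α) (l : List α), (x :: l).IsChain (fun y z => b y = a z) →
      ((x :: l).map fun y => b y - a y).sum = b ((x :: l).getLast (cons_ne_nil _ _)) - a x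
  | _, [], _ => by simp
  | x, y :: l, h => by
    rw [isChain_cons_cons] at h
    rw [map_cons, sum_cons, sum_map_sub_of_isChain a b y l h.2, getLast_cons (cons_ne_nil y l),
      h.1]
    abel

section TropicalCurve

variable {V D : Type}

theorem loopIntegral_pos (len ω : D → ℝ) {c : List D} (hc : c ≠ [])
    (hpos : ∀ d ∈ c, 0 < len d * ω d) : 0 < loopIntegral len ω c :=
  List.sum_pos _ (by simpa using hpos) (by simpa using hc)

noncomputable def grad (rev : D → D) (tail : D → V) (len : D → ℝ) :
    (V → ℝ) →ₗ[ℝ] (D → ℝ) where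
  toFun f d := (f (tail (rev d)) - f (tail d)) / len d
  map_add' f g := by funext d; simp only [Pi.add_apply]; ring
  map_smul' r f := by funext d; simp only [Pi.smul_apply, smul_eq_mul, RingHom.id_apply]; ring

theorem isExact_grad {rev : D → D} {tail : D → V} {len : D → ℝ} (hlen : ∀ d, len d ≠ 0)
    (f : V → ℝ) : IsExact rev tail len (grad rev tail len f) := by
  rintro (_ | ⟨d, c⟩) ⟨hne, -, -, hchain, hclosed⟩
  · exact absurd rfl hne
  have hslope : ∀ e, len e * grad rev tail len f e = f (tail (rev e)) - f (tail e) := fun e =>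
    mul_div_cancel₀ _ (hlen e)
  rw [loopIntegral, List.map_congr_left fun e _ => hslope e,
    List.sum_map_sub_of_isChain (fun e => f (tail e)) (fun e => f (tail (rev e))) d c
      (hchain.imp fun _ _ h => congrArg f h)]
  simp [hclosed d rfl _ (List.getLast?_eq_some_getLast _)]

theorem finrank_ker_grad_le_one {rev : D → D} {tail : D → V} {len : D → ℝ}
    (hconn : GraphConnected rev tail) (hlen : ∀ d, len d ≠ 0) :
    finrank ℝ (LinearMap.ker (grad rev tail len)) ≤ 1 := by
  have hconst : ∀ f ∈ LinearMap.ker (grad rev tail len), ∀ v w, f v = f w := by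
    intro f hf v w
    induction hconn v w with
    | refl => rfl
    | tail _ hstep ih =>
      obtain ⟨d, rfl, rfl⟩ := hstep
      have hslope : (f (tail (rev d)) - f (tail d)) / len d = 0 := congrFun hf d
      rw [div_eq_zero_iff, sub_eq_zero] at hslope
      exact ih.trans (hslope.resolve_right (hlen d)).symm
  calc finrank ℝ (LinearMap.ker (grad rev tail len))
      ≤ finrank ℝ (Submodule.span ℝ {fun _ : V => (1 : ℝ)}) :=
        Submodule.finrank_mono fun f hf => by
        rcases isEmpty_or_nonempty V with _ | ⟨⟨v₀⟩⟩
        · exact Subsingleton.elim (0 : V → ℝ) f ▸ Submodule.zero_mem _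
        · exact Submodule.mem_span_singleton.mpr
            ⟨f v₀, funext fun v => by simp [hconst f hf v v₀]⟩
    _ ≤ 1 := by simpa using finrank_span_le_card ({fun _ => 1} : Set (V → ℝ))

def divergence [Fintype D] [DecidableEq V] (tail : D → V) (isLeaf : V → Prop) :
    (D → ℝ) →ₗ[ℝ] ({v // ¬ isLeaf v} → ℝ) where
  toFun ω v := ∑ d ∈ univ.filter (fun d => tail d = v.1), ω d
  map_add' ω η := by funext v; exact Finset.sum_add_distrib
  map_smul' r ω := by funext v; exact (Finset.mul_sum _ _ _).symm

variable [Fintype D] [DecidableEq V] {rev : D → D} {tail : D → V} {isLeaf : V → Prop}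
  [DecidablePred isLeaf] {len ω : D → ℝ}

theorem IsBalanced.exists_pos_next (hω : IsBalanced rev tail isLeaf ω)
    (hhol : IsHolomorphic tail isLeaf ω) {d : D} (hd : 0 < ω d) :
    ∃ d', tail d' = tail (rev d) ∧ 0 < ω d' := by
  have hrevd : ω (rev d) < 0 := by rw [hω.1]; linarith
  have hinner : ¬ isLeaf (tail (rev d)) := fun h => hrevd.ne (hhol _ h)
  obtain ⟨d', hd', hpos⟩ := Finset.exists_pos_of_sum_zero_of_exists_nonzero ω (hω.2 _ hinner)
    ⟨rev d, by simp, hrevd.ne⟩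
  exact ⟨d', (Finset.mem_filter.mp hd').2, hpos⟩

theorem IsBalanced.eq_zero_of_isExact_of_isHolomorphic (hlen : ∀ d, 0 < len d)
    (hω : IsBalanced rev tail isLeaf ω) (hex : IsExact rev tail len ω)
    (hhol : IsHolomorphic tail isLeaf ω) : ω = 0 := by
  by_contra hne
  obtain ⟨d₀, hd₀⟩ : ∃ d, 0 < ω d := by
    obtain ⟨d, hd⟩ := Function.ne_iff.mp hne
    rcases hd.lt_or_gt with h | h
    · exact ⟨rev d, by rw [hω.1]; simpa using h⟩
    · exact ⟨d, h⟩
  have : Nonempty {d // 0 < ω d} := ⟨⟨d₀, hd₀⟩⟩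
  choose next hnext_tail hnext_pos using fun d : {d // 0 < ω d} => hω.exists_pos_next hhol d.2
  obtain ⟨l, hl, hnodup, hchain, hclosed⟩ :=
    exists_cyclic_list fun d : {d // 0 < ω d} => (⟨next d, hnext_pos d⟩ : {d // 0 < ω d})
  have hpos : ∀ d ∈ l.map Subtype.val, 0 < ω d := by
    intro d hd
    obtain ⟨a, -, rfl⟩ := List.mem_map.mp hd
    exact a.2
  have hloop : IsLoop rev tail (l.map Subtype.val) := by
    refine ⟨by rwa [Ne, List.map_eq_nil_iff], hnodup.map Subtype.val_injective,
      fun d hd hrd => ?_, ?_, ?_⟩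
    · have := hpos _ hrd
      rw [hω.1] at this
      linarith [hpos d hd]
    · rw [List.Chain', List.isChain_map]
      exact hchain.imp fun a b hab => by rw [← hab]; exact (hnext_tail a).symm
    · simp only [List.head?_map, List.getLast?_map, Option.mem_map]
      rintro _ ⟨a, ha, rfl⟩ _ ⟨b, hb, rfl⟩
      rw [← hclosed a ha b hb, hnext_tail]
  exact (loopIntegral_pos len ω hloop.1 fun d hd => mul_pos (hlen d) (hpos d hd)).ne'
    (hex _ hloop)

end TropicalCurve

section FiniteCurve

variable {V D : Type} [Fintype V] [Fintype D] [DecidableEq V]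

theorem sum_filter_tail_eq_sum_fiberwise {M : Type*} [AddCommMonoid M] (tail : D → V)
    (p : V → Prop) [DecidablePred p] (f : D → M) :
    ∑ d ∈ univ.filter (fun d => p (tail d)), f d =
      ∑ v ∈ univ.filter p, ∑ d ∈ univ.filter (fun d => tail d = v), f d := by
  rw [Finset.sum_fiberwise_eq_sum_filter]
  simp

theorem card_filter_isLeaf_tail (tail : D → V) (isLeaf : V → Prop) [DecidablePred isLeaf]
    (hleaf : ∀ v, isLeaf v → #(univ.filter fun d => tail d = v) = 1) :
    #(univ.filter fun d => isLeaf (tail d)) = #(univ.filter isLeaf) := by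
  simp only [Finset.card_eq_sum_ones, sum_filter_tail_eq_sum_fiberwise tail isLeaf]
  exact Finset.sum_congr rfl fun v hv => by
    rw [← Finset.card_eq_sum_ones, hleaf v (Finset.mem_filter.mp hv).2]

variable {rev : D → D} {tail : D → V} {isLeaf : V → Prop} [DecidablePred isLeaf]
  {len : D → ℝ}

theorem IsBalanced.sum_residues_eq_zero (hrev : ∀ d, rev (rev d) = d)
    (hrevne : ∀ d, rev d ≠ d) {ω : D → ℝ} (hω : IsBalanced rev tail isLeaf ω) :
    ∑ d ∈ univ.filter (fun d => isLeaf (tail d)), ω d = 0 := by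
  have htotal : ∑ d, ω d = 0 :=
    Finset.sum_ninvolution rev (fun d => by rw [hω.1]; ring) (fun d _ => hrevne d)
      (fun _ => mem_univ _) hrev
  have hinterior : ∑ d ∈ univ.filter (fun d => ¬ isLeaf (tail d)), ω d = 0 := by
    rw [sum_filter_tail_eq_sum_fiberwise tail (fun v => ¬ isLeaf v)]
    exact Finset.sum_eq_zero fun v hv => hω.2 v (Finset.mem_filter.mp hv).2
  rw [← Finset.sum_filter_add_sum_filter_not univ (fun d => isLeaf (tail d))] at htotal
  linarith

variable [DecidableEq D]

theorem finrank_omega0Sub_le (hrev : ∀ d, rev (rev d) = d) (hrevne : ∀ d, rev d ≠ d)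
    (hlen : ∀ d, 0 < len d) :
    finrank ℝ (Omega0Sub rev tail isLeaf len) ≤
      #(univ.filter fun d => isLeaf (tail d)) - 1 := by
  set residues :=
    (LinearMap.funLeft ℝ ℝ (Subtype.val : {d // isLeaf (tail d)} → D)).domRestrict
      (Omega0Sub rev tail isLeaf len)
  have hinj : Injective residues := by
    refine LinearMap.ker_eq_bot.mp (LinearMap.ker_eq_bot'.mpr fun ω hω => Subtype.ext ?_)
    exact ω.2.1.eq_zero_of_isExact_of_isHolomorphic hlen ω.2.2 fun d hd =>
      congrFun hω ⟨d, hd⟩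
  rw [← LinearMap.finrank_range_of_inj hinj, ← Fintype.card_subtype]
  refine Submodule.finrank_le_card_sub_one_of_sum_eq_zero _ ?_
  rintro _ ⟨ω, rfl⟩
  rw [← ω.2.1.sum_residues_eq_zero hrev hrevne]
  exact (Finset.sum_subtype _ (by simp) _).symm

omit [Fintype V] in
theorem grad_mem_omega0Sub (hrev : ∀ d, rev (rev d) = d) (hlen : ∀ d, 0 < len d)
    (hlensym : ∀ d, len (rev d) = len d) {f : V → ℝ}
    (hf : f ∈ LinearMap.ker (divergence tail isLeaf ∘ₗ grad rev tail len)) :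
    grad rev tail len f ∈ Omega0Sub rev tail isLeaf len := by
  refine ⟨⟨fun d => ?_, fun v hv => congrFun hf ⟨v, hv⟩⟩,
    isExact_grad (fun d => (hlen d).ne') f⟩
  simp only [grad, LinearMap.coe_mk, AddHom.coe_mk, hrev, hlensym]
  ring

theorem card_sub_one_le_finrank_omega0Sub (hrev : ∀ d, rev (rev d) = d)
    (hconn : GraphConnected rev tail) (hlen : ∀ d, 0 < len d)
    (hlensym : ∀ d, len (rev d) = len d) :
    #(univ.filter isLeaf) - 1 ≤ finrank ℝ (Omega0Sub rev tail isLeaf len) := by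
  set laplacian := divergence tail isLeaf ∘ₗ grad rev tail len
  have hharmonic : #(univ.filter isLeaf) ≤ finrank ℝ (LinearMap.ker laplacian) := by
    have hrank := LinearMap.finrank_range_add_finrank_ker laplacian
    have hrange := (LinearMap.range laplacian).finrank_le
    have hleaves : #(univ.filter isLeaf) ≤ Fintype.card V := Finset.card_filter_le _ _
    have hinterior :
        Fintype.card {v // ¬ isLeaf v} = Fintype.card V - #(univ.filter isLeaf) := by
      rw [Fintype.card_subtype_compl, Fintype.card_subtype]
    rw [Module.finrank_fintype_fun_eq_card] at hrank hrange
    omega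
  have hmap :
      (LinearMap.ker laplacian).map (grad rev tail len) ≤ Omega0Sub rev tail isLeaf len :=
    Submodule.map_le_iff_le_comap.mpr fun f hf => grad_mem_omega0Sub hrev hlen hlensym hf
  have hsplit := Submodule.finrank_le_finrank_map_add_finrank_ker (grad rev tail len)
    (LinearMap.ker laplacian)
  have hker := finrank_ker_grad_le_one hconn fun d => (hlen d).ne'
  have := Submodule.finrank_mono hmap
  omega

theorem finrank_omega0Sub (hrev : ∀ d, rev (rev d) = d) (hrevne : ∀ d, rev d ≠ d)
    (hconn : GraphConnected rev tail)
    (hleaf : ∀ v, isLeaf v → #(univ.filter fun d => tail d = v) = 1)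
    (hlen : ∀ d, 0 < len d) (hlensym : ∀ d, len (rev d) = len d) :
    finrank ℝ (Omega0Sub rev tail isLeaf len) = #(univ.filter isLeaf) - 1 :=
  le_antisymm
    (card_filter_isLeaf_tail tail isLeaf hleaf ▸ finrank_omega0Sub_le hrev hrevne hlen)
    (card_sub_one_le_finrank_omega0Sub hrev hconn hlen hlensym)

omit [Fintype V]

variable (rev tail isLeaf len) in
def harmSubEquivPi (m : ℕ) :
    HarmSub rev tail isLeaf len m ≃ₗ[ℝ] (Fin m → Omega0Sub rev tail isLeaf len) where
  toFun ω j := ⟨fun d => ω.1 d j, ω.2 j⟩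
  invFun g := ⟨fun d j => (g j).1 d, fun j => (g j).2⟩
  map_add' _ _ := rfl
  map_smul' _ _ := rfl
  left_inv _ := rfl
  right_inv _ := rfl

end FiniteCurve

theorem stmt17_general {V D : Type} [Fintype V] [Fintype D] [DecidableEq V] [DecidableEq D]
    (rev : D → D) (tail : D → V) (isLeaf : V → Prop) [DecidablePred isLeaf]
    (len : D → ℝ) (m n : ℕ)
    (hrev : ∀ d, rev (rev d) = d) (hrevne : ∀ d, rev d ≠ d)
    (hconn : GraphConnected rev tail)
    (hleaf : ∀ v, isLeaf v ↔ (univ.filter fun d => tail d = v).card = 1)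
    (hlen : ∀ d, 0 < len d) (hlensym : ∀ d, len (rev d) = len d)
    (hn : (univ.filter fun v => isLeaf v).card = n) :
    Module.finrank ℝ (HarmSub rev tail isLeaf len m) = m * (n - 1) := by
  rw [(harmSubEquivPi rev tail isLeaf len m).finrank_eq, Module.finrank_pi_fintype,
    Finset.sum_congr rfl fun _ _ =>
      finrank_omega0Sub hrev hrevne hconn (fun v => (hleaf v).1) hlen hlensym, ← hn]
  simp

/-- The space of harmonic tropical morphisms from a simple tropical curve with `n`
leaves to `ℝ^m`, modulo translations of `ℝ^m`, has dimension `m(n−1)`. -/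
theorem stmt17 {V D : Type} [Fintype V] [Fintype D] [DecidableEq V] [DecidableEq D]
    (rev : D → D) (tail : D → V) (isLeaf : V → Prop) [DecidablePred isLeaf]
    (len : D → ℝ) (m n : ℕ)
    (hrev : ∀ d, rev (rev d) = d) (hrevne : ∀ d, rev d ≠ d)
    (hconn : GraphConnected rev tail)
    (hleaf : ∀ v, isLeaf v ↔ (univ.filter fun d => tail d = v).card = 1)
    (htri : ∀ v, ¬ isLeaf v → (univ.filter fun d => tail d = v).card = 3)
    (hlen : ∀ d, 0 < len d) (hlensym : ∀ d, len (rev d) = len d)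
    (hn : (univ.filter fun v => isLeaf v).card = n) (hn2 : 2 ≤ n) :
    Module.finrank ℝ (HarmSub rev tail isLeaf len m) = m * (n - 1) :=
  stmt17_general rev tail isLeaf len m n hrev hrevne hconn hleaf hlen hlensym hn
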